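/- Let P be a finite poset with legs a, b, and let F ⊆ 2^[n] be an induced P-saturated family. For each x ∈ [n] with {x} ∉ F, fix a partner C_x of x of maximum cardinality among all partners of x, and define f : [n] → F ∖ {∅} by f(x) = {x} if {x} ∈ F and f(x) = C_x ∪ {x} otherwise. Then f is injective. -/

import Mathlib

open Finset

/-- A family of finite sets contains an induced copy of the poset `P`. -/
def ContainsIndCopy (P : Type*) [PartialOrder P] (F : Finset (Finset ℕ)) : Prop :=
  ∃ f : P → Finset ℕ, Function.Injective f ∧ (∀ p, f p ∈ F) ∧
    ∀ p q : P, p ≤ q ↔ f p ⊆ f q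

/-- `F ⊆ 2^[n]` is induced `P`-saturated. -/
def IsIndPSaturated (n : ℕ) (P : Type*) [PartialOrder P] (F : Finset (Finset ℕ)) : Prop :=
  (∀ A ∈ F, A ⊆ Finset.Icc 1 n) ∧
  ¬ ContainsIndCopy P F ∧
  ∀ G ⊆ Finset.Icc 1 n, G ∉ F → ContainsIndCopy P (insert G F)

/-- `sat*(n, P)`: minimum size of an induced `P`-saturated family in `2^[n]`. -/
noncomputable def satStarP (n : ℕ) (P : Type*) [PartialOrder P] : ℕ :=
  sInf {m | ∃ F : Finset (Finset ℕ), IsIndPSaturated n P F ∧ F.card = m}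

/-- `a` and `b` are legs of `P`: incomparable, and each strictly smaller than
every element of `P \ {a, b}`. -/
def IsLegs (P : Type*) [PartialOrder P] (a b : P) : Prop :=
  ¬ a ≤ b ∧ ¬ b ≤ a ∧ ∀ c : P, c ≠ a → c ≠ b → a < c ∧ b < c

/-- `C ∈ F` is a partner of `x`: `{x}` and `C` form the legs of some induced
copy of `P` in `F ∪ {{x}}`. -/
def IsPartner (P : Type*) [PartialOrder P] (a b : P) (F : Finset (Finset ℕ))
    (x : ℕ) (C : Finset ℕ) : Prop :=
  C ∈ F ∧ ∃ f : P → Finset ℕ, Function.Injective f ∧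
    (∀ p, f p ∈ insert ({x} : Finset ℕ) F) ∧
    (∀ p q : P, p ≤ q ↔ f p ⊆ f q) ∧
    ({f a, f b} : Set (Finset ℕ)) = {({x} : Finset ℕ), C}

/-!
If `Cₓ ∪ {x} = C_y ∪ {y}` with `x ≠ y`, then `x ∈ C_y \ Cₓ` and `y ∈ Cₓ \ C_y`. Take an induced
copy of `P` in `F ∪ {{x}}` whose legs are `{x}` and `Cₓ`. Every non-leg element of it contains
`{x} ∪ Cₓ = {y} ∪ C_y`, hence strictly contains `C_y`, while `C_y` and `Cₓ` are incomparable.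
So `C_y ∈ F` can take the place of the leg `{x}`, which gives an induced copy of `P` inside `F`.
-/

section Legs

variable {P : Type*} [PartialOrder P] {a b : P}

theorem IsLegs.symm (h : IsLegs P a b) : IsLegs P b a :=
  ⟨h.2.1, h.1, fun c hcb hca => (h.2.2 c hca hcb).symm⟩

theorem IsLegs.ne (h : IsLegs P a b) : a ≠ b := fun hab => h.1 (hab ▸ le_rfl)

theorem IsLegs.le_iff_update {α : Type*} [PartialOrder α] [DecidableEq P] (hlegs : IsLegs P a b)
    {g : P → α} (hg : ∀ p q, p ≤ q ↔ g p ≤ g q) {D : α} (hDb : ¬ D ≤ g b) (hbD : ¬ g b ≤ D)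
    (hD : ∀ c, c ≠ a → c ≠ b → D < g c) (p q : P) :
    p ≤ q ↔ Function.update g a D p ≤ Function.update g a D q := by
  by_cases hp : p = a <;> by_cases hq : q = a
  · simp [hp, hq]
  · subst hp
    rw [Function.update_self, Function.update_of_ne hq]
    by_cases hqb : q = b
    · subst hqb
      exact iff_of_false hlegs.1 hDb
    · exact iff_of_true (hlegs.2.2 q hq hqb).1.le (hD q hq hqb).le
  · subst hq
    rw [Function.update_self, Function.update_of_ne hp]
    by_cases hpb : p = b
    · subst hpb
      exact iff_of_false hlegs.2.1 hbD
    · exact iff_of_false (fun h => hp (le_antisymm h (hlegs.2.2 p hp hpb).1.le))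
        (hD p hp hpb).not_ge
  · rw [Function.update_of_ne hp, Function.update_of_ne hq]
    exact hg p q

end Legs

namespace IsPartner

variable {P : Type*} [PartialOrder P] {a b : P} {F : Finset (Finset ℕ)} {x y : ℕ}
  {C Cx Cy : Finset ℕ}

theorem exists_copy_with_legs (hlegs : IsLegs P a b) (h : IsPartner P a b F x C) :
    ∃ a' b', IsLegs P a' b' ∧ ∃ g : P → Finset ℕ, (∀ p, g p ∈ insert {x} F) ∧
      (∀ p q, p ≤ q ↔ g p ⊆ g q) ∧ g a' = {x} ∧ g b' = C := by
  obtain ⟨-, g, hginj, hgF, hg, hlegset⟩ := h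
  have hga : g a = {x} ∨ g a = C := by
    simpa using (hlegset ▸ Set.mem_insert (g a) {g b} : g a ∈ ({{x}, C} : Set (Finset ℕ)))
  have hgb : g b = {x} ∨ g b = C := by
    simpa using (hlegset ▸ Set.mem_insert_of_mem (g a) (Set.mem_singleton (g b)) :
      g b ∈ ({{x}, C} : Set (Finset ℕ)))
  have hgab : g a ≠ g b := hginj.ne hlegs.ne
  rcases hga with hga | hga <;> rcases hgb with hgb | hgb
  · exact absurd (hga.trans hgb.symm) hgab
  · exact ⟨a, b, hlegs, g, hgF, hg, hga, hgb⟩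
  · exact ⟨b, a, hlegs.symm, g, hgF, hg, hgb, hga⟩
  · exact absurd (hga.trans hgb.symm) hgab

theorem notMem (hlegs : IsLegs P a b) (h : IsPartner P a b F x C) : x ∉ C := by
  obtain ⟨a', b', hlegs', g, -, hg, hga, hgb⟩ := h.exists_copy_with_legs hlegs
  intro hxC
  exact hlegs'.1 ((hg a' b').2 (by rw [hga, hgb]; exact singleton_subset_iff.2 hxC))

theorem containsIndCopy_of_insert_eq (hlegs : IsLegs P a b) (hx : IsPartner P a b F x Cx)
    (hy : IsPartner P a b F y Cy) (hxy : x ≠ y) (heq : insert x Cx = insert y Cy) :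
    ContainsIndCopy P F := by
  obtain ⟨a', b', hlegs', g, hgF, hg, hga, hgb⟩ := hx.exists_copy_with_legs hlegs
  have hxCx := hx.notMem hlegs
  have hyCy := hy.notMem hlegs
  have hxCy : x ∈ Cy := (mem_insert.1 (heq ▸ mem_insert_self x Cx)).resolve_left hxy
  have hyCx : y ∈ Cx := (mem_insert.1 (heq ▸ mem_insert_self y Cy)).resolve_left hxy.symm
  have hCy_lt : ∀ c, c ≠ a' → c ≠ b' → Cy < g c := by
    intro c hca hcb
    have hxc : {x} ⊆ g c := hga ▸ (hg a' c).1 (hlegs'.2.2 c hca hcb).1.le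
    have hCxc : Cx ⊆ g c := hgb ▸ (hg b' c).1 (hlegs'.2.2 c hca hcb).2.le
    calc Cy < insert y Cy := ssubset_insert hyCy
      _ = insert x Cx := heq.symm
      _ ≤ g c := insert_subset (singleton_subset_iff.1 hxc) hCxc
  classical
  have hupd := hlegs'.le_iff_update hg (D := Cy) (by rw [hgb]; exact fun h => hxCx (h hxCy))
    (by rw [hgb]; exact fun h => hyCy (h hyCx)) hCy_lt
  refine ⟨Function.update g a' Cy,
    (OrderEmbedding.ofMapLEIff _ fun p q => (hupd p q).symm).injective, fun p => ?_, hupd⟩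
  by_cases hp : p = a'
  · subst hp
    simpa using hy.1
  · rw [Function.update_of_ne hp]
    refine (mem_insert.1 (hgF p)).resolve_left fun hgp => hp ?_
    exact (OrderEmbedding.ofMapLEIff g fun p q => (hg p q).symm).injective (hgp.trans hga.symm)

end IsPartner

theorem stmt13_general (P : Type*) [PartialOrder P] (a b : P)
    (hlegs : IsLegs P a b)
    (n : ℕ) (F : Finset (Finset ℕ)) (hsat : IsIndPSaturated n P F)
    (Cx : ℕ → Finset ℕ)
    (hCx : ∀ x ∈ Finset.Icc 1 n, ({x} : Finset ℕ) ∉ F →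
      IsPartner P a b F x (Cx x) ∧
      ∀ C : Finset ℕ, IsPartner P a b F x C → C.card ≤ (Cx x).card) :
    Set.InjOn
      (fun x : ℕ => if ({x} : Finset ℕ) ∈ F then ({x} : Finset ℕ) else insert x (Cx x))
      (Finset.Icc 1 n : Finset ℕ) := by
  intro x hx y hy hfeq
  by_contra hxy
  by_cases hxF : ({x} : Finset ℕ) ∈ F <;> by_cases hyF : ({y} : Finset ℕ) ∈ F <;>
    simp only [hxF, hyF, if_true, if_false] at hfeq
  · exact hxy (singleton_injective hfeq)
  · exact hxy (mem_singleton.1 (hfeq ▸ mem_insert_self y (Cx y))).symm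
  · exact hxy (mem_singleton.1 (hfeq.symm ▸ mem_insert_self x (Cx x)))
  · exact hsat.2.1 ((hCx x hx hxF).1.containsIndCopy_of_insert_eq hlegs (hCx y hy hyF).1 hxy hfeq)

/-- the map `x ↦ {x}` (if `{x} ∈ F`) and `x ↦ Cₓ ∪ {x}`
(otherwise, `Cₓ` a maximum-cardinality partner of `x`) is injective on `[n]`. -/
theorem stmt13 (P : Type*) [PartialOrder P] [Fintype P] (a b : P)
    (hlegs : IsLegs P a b)
    (n : ℕ) (F : Finset (Finset ℕ)) (hsat : IsIndPSaturated n P F)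
    (Cx : ℕ → Finset ℕ)
    (hCx : ∀ x ∈ Finset.Icc 1 n, ({x} : Finset ℕ) ∉ F →
      IsPartner P a b F x (Cx x) ∧
      ∀ C : Finset ℕ, IsPartner P a b F x C → C.card ≤ (Cx x).card) :
    Set.InjOn
      (fun x : ℕ => if ({x} : Finset ℕ) ∈ F then ({x} : Finset ℕ) else insert x (Cx x))
      (Finset.Icc 1 n : Finset ℕ) :=
  stmt13_general P a b hlegs n F hsat Cx hCx
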